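/- Let S = ℚ[X, Y, Z]/(X², Y², Z²) and write x, y, z for the images of X, Y, Z. Let B be the additive subgroup of S generated by xz and (1/2)(xz + yz). Then for all rational numbers q₁, q₂, the additive subgroup of S generated by q₁·xz and q₂·yz is not equal to B. -/
import Mathlib


noncomputable section

open MvPolynomial

/-- The ideal `(X², Y², Z²)` of `ℚ[X, Y, Z]`. -/
def I3 : Ideal (MvPolynomial (Fin 3) ℚ) :=
  Ideal.span {(X 0 : MvPolynomial (Fin 3) ℚ) ^ 2, (X 1) ^ 2, (X 2) ^ 2}

/-- The algebra `S = ℚ[X, Y, Z]/(X², Y², Z²)`. -/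
abbrev S3 : Type := MvPolynomial (Fin 3) ℚ ⧸ I3

/-- The image `x` of `X` in `S`. -/
def xS : S3 := Ideal.Quotient.mk I3 (X 0)

/-- The image `y` of `Y` in `S`. -/
def yS : S3 := Ideal.Quotient.mk I3 (X 1)

/-- The image `z` of `Z` in `S`. -/
def zS : S3 := Ideal.Quotient.mk I3 (X 2)

abbrev mXZ : Fin 3 →₀ ℕ := Finsupp.single 0 1 + Finsupp.single 2 1
abbrev mYZ : Fin 3 →₀ ℕ := Finsupp.single 1 1 + Finsupp.single 2 1

lemma coeff_mul_Xsq (m : Fin 3 →₀ ℕ) (i : Fin 3) (hm : m i ≤ 1)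
    (f : MvPolynomial (Fin 3) ℚ) : coeff m (f * X i ^ 2) = 0 := by
  rw [pow_two, ← mul_assoc, coeff_mul_X']
  split_ifs with h
  · rw [coeff_mul_X', if_neg]
    simp only [Finsupp.mem_support_iff, Finsupp.tsub_apply, Finsupp.single_apply, if_pos rfl,
      if_true, ne_eq, not_not]
    omega
  · rfl

lemma coeff_I3 (m : Fin 3 →₀ ℕ) (h0 : m 0 ≤ 1) (h1 : m 1 ≤ 1) (h2 : m 2 ≤ 1)
    {p : MvPolynomial (Fin 3) ℚ} (hp : p ∈ I3) : coeff m p = 0 := by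
  rw [I3, show ({(X 0 : MvPolynomial (Fin 3) ℚ) ^ 2, (X 1) ^ 2, (X 2) ^ 2} : Set _) =
      insert ((X 0 : MvPolynomial (Fin 3) ℚ) ^ 2) (insert ((X 1 : MvPolynomial (Fin 3) ℚ) ^ 2)
        {(X 2 : MvPolynomial (Fin 3) ℚ) ^ 2}) from rfl, Ideal.mem_span_insert] at hp
  obtain ⟨a, z, hz, rfl⟩ := hp
  rw [Ideal.mem_span_insert] at hz
  obtain ⟨b, w, hw, rfl⟩ := hz
  rw [Ideal.mem_span_singleton'] at hw
  obtain ⟨c, rfl⟩ := hw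
  simp only [coeff_add]
  rw [coeff_mul_Xsq m 0 h0, coeff_mul_Xsq m 1 h1, coeff_mul_Xsq m 2 h2]
  ring

/-- In `S = ℚ[X,Y,Z]/(X²,Y²,Z²)`, the additive subgroup `B`
generated by `xz` and `(1/2)(xz + yz)` is not generated by rational multiples of the
monomials `xz` and `yz`: for all rationals `q₁, q₂`, the additive subgroup generated by
`q₁·xz` and `q₂·yz` is not equal to `B`. -/
theorem stmt12 :
    ∀ q₁ q₂ : ℚ,
      AddSubgroup.closure ({q₁ • (xS * zS), q₂ • (yS * zS)} : Set S3) ≠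
      AddSubgroup.closure ({xS * zS, (2 : ℚ)⁻¹ • (xS * zS + yS * zS)} : Set S3) := by
  intro q₁ q₂ h
  set P : MvPolynomial (Fin 3) ℚ := X 0 * X 2 with hP
  set Q : MvPolynomial (Fin 3) ℚ := X 1 * X 2 with hQ
  have key : ∀ (c : ℚ) (p : MvPolynomial (Fin 3) ℚ),
      Ideal.Quotient.mk I3 (c • p) = c • Ideal.Quotient.mk I3 p := by
    intro c p
    exact (map_smul (Ideal.Quotient.mkₐ ℚ I3) c p)
  have hxz : xS * zS = Ideal.Quotient.mk I3 P := rfl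
  have hyz : yS * zS = Ideal.Quotient.mk I3 Q := rfl
  have h1 : q₁ • (xS * zS) ∈ AddSubgroup.closure
      ({xS * zS, (2 : ℚ)⁻¹ • (xS * zS + yS * zS)} : Set S3) := by
    rw [← h]; exact AddSubgroup.subset_closure (by simp)
  rw [AddSubgroup.mem_closure_pair] at h1
  obtain ⟨m, n, hmn⟩ := h1
  have h2 : (2 : ℚ)⁻¹ • (xS * zS + yS * zS) ∈ AddSubgroup.closure
      ({q₁ • (xS * zS), q₂ • (yS * zS)} : Set S3) := by
    rw [h]; exact AddSubgroup.subset_closure (by simp)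
  rw [AddSubgroup.mem_closure_pair] at h2
  obtain ⟨a, b, hab⟩ := h2
  have e1' : Ideal.Quotient.mk I3 (m • P + n • ((2:ℚ)⁻¹ • (P + Q)))
      = Ideal.Quotient.mk I3 (q₁ • P) := by
    rw [map_add, map_zsmul, map_zsmul, key, key, map_add, ← hxz, ← hyz]
    exact hmn
  have e2' : Ideal.Quotient.mk I3 (a • (q₁ • P) + b • (q₂ • Q))
      = Ideal.Quotient.mk I3 ((2:ℚ)⁻¹ • (P + Q)) := by
    rw [map_add, map_zsmul, map_zsmul, key, key, key, map_add, ← hxz, ← hyz]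
    exact hab
  have e1 := Ideal.Quotient.eq.mp e1'
  have e2 := Ideal.Quotient.eq.mp e2'
  have cPXZ : coeff mXZ P = 1 := by simp [hP, X, monomial_mul, coeff_monomial]
  have cQXZ : coeff mXZ Q = 0 := by
    simp only [hQ, X, monomial_mul, coeff_monomial, one_mul]
    rw [if_neg]
    intro hh
    have := DFunLike.congr_fun hh 0
    simp [Finsupp.single_apply] at this
  have cPYZ : coeff mYZ P = 0 := by
    simp only [hP, X, monomial_mul, coeff_monomial, one_mul]
    rw [if_neg]
    intro hh
    have := DFunLike.congr_fun hh 0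
    simp [Finsupp.single_apply] at this
  have cQYZ : coeff mYZ Q = 1 := by simp [hQ, X, monomial_mul, coeff_monomial]
  have hXZ0 : (mXZ : Fin 3 →₀ ℕ) 0 ≤ 1 := by simp [Finsupp.single_apply]
  have hXZ1 : (mXZ : Fin 3 →₀ ℕ) 1 ≤ 1 := by simp [Finsupp.single_apply]
  have hXZ2 : (mXZ : Fin 3 →₀ ℕ) 2 ≤ 1 := by simp [Finsupp.single_apply]
  have hYZ0 : (mYZ : Fin 3 →₀ ℕ) 0 ≤ 1 := by simp [Finsupp.single_apply]
  have hYZ1 : (mYZ : Fin 3 →₀ ℕ) 1 ≤ 1 := by simp [Finsupp.single_apply]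
  have hYZ2 : (mYZ : Fin 3 →₀ ℕ) 2 ≤ 1 := by simp [Finsupp.single_apply]
  have c1 := coeff_I3 mXZ hXZ0 hXZ1 hXZ2 e1
  have c2 := coeff_I3 mYZ hYZ0 hYZ1 hYZ2 e1
  have c3 := coeff_I3 mXZ hXZ0 hXZ1 hXZ2 e2
  simp only [coeff_sub, coeff_add, coeff_smul] at c1 c2 c3
  simp only [cPXZ, cQXZ, cPYZ, cQYZ, smul_eq_mul, zsmul_eq_mul] at c1 c2 c3
  have hn : (n : ℚ) = 0 := by linarith only [c2]
  have hq1 : q₁ = (m : ℚ) := by linarith only [c1, hn]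
  rw [hq1] at c3
  have hint : ((2 * (a * m) : ℤ) : ℚ) = ((1 : ℤ) : ℚ) := by push_cast; linarith only [c3]
  have := Int.cast_injective (α := ℚ) hint
  omega

end
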